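/- arXiv:0912.0676 — 2 statements merged into one kernel-verified Lean document; each statement's English description precedes it below -/
import Mathlib

section
/- With σ and ε as above: 45u − 25w ∈ σ and 45u + 126w ∈ ε(σ), and (45u − 25w) − (45u + 126w) = −151w. Consequently, −w ∈ (σ − ε(σ)) ∩ (ε(σ) − ε²(σ)) ∩ (ε²(σ) − σ), where for cones C, C' the set C − C' denotes {x − y : x ∈ C, y ∈ C'}. -/
open Pointwise

/-- The cone generated by a finite family of vectors: all nonnegative
rational linear combinations of the `g i`. -/
def coneGen {V : Type*} [AddCommGroup V] [Module ℚ V] {n : ℕ} (g : Fin n → V) : Set V :=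
  {x | ∃ c : Fin n → ℚ, (∀ i, 0 ≤ c i) ∧ x = ∑ i, c i • g i}

/-- A set is a cone if it is the cone generated by some finite family of vectors. -/
def IsCone {V : Type*} [AddCommGroup V] [Module ℚ V] (C : Set V) : Prop :=
  ∃ (n : ℕ) (g : Fin n → V), C = coneGen g

/-- `F` is a face of the cone `C` if `F = C ∩ l⁻¹(0)` for some linear form `l`
nonnegative on `C`. -/
def IsFaceOf {V : Type*} [AddCommGroup V] [Module ℚ V] (F C : Set V) : Prop :=
  ∃ l : V →ₗ[ℚ] ℚ, (∀ x ∈ C, 0 ≤ l x) ∧ F = C ∩ {x | l x = 0}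

/-- A fan: a finite collection of strictly convex cones, closed under taking faces,
such that the intersection of any two of its cones is a face of each. -/
def IsFan {V : Type*} [AddCommGroup V] [Module ℚ V] (S : Set (Set V)) : Prop :=
  S.Finite ∧
  (∀ C ∈ S, IsCone C ∧ C ∩ (-C) = ({0} : Set V)) ∧
  (∀ C ∈ S, ∀ F : Set V, IsFaceOf F C → F ∈ S) ∧
  (∀ C ∈ S, ∀ C' ∈ S, IsFaceOf (C ∩ C') C ∧ IsFaceOf (C ∩ C') C')

/-- A cone of the collection `S` is maximal if it is not strictly contained in
another cone of `S`. -/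
def IsMaximalIn {V : Type*} [AddCommGroup V] [Module ℚ V] (S : Set (Set V)) (C : Set V) : Prop :=
  C ∈ S ∧ ∀ C' ∈ S, C ⊆ C' → C' = C

/-- A fan is quasi-projective if there is a family of linear forms indexed by its
maximal cones which agree on pairwise intersections and satisfy the strict
inequality condition. -/
def IsQuasiProjectiveFan {V : Type*} [AddCommGroup V] [Module ℚ V] (S : Set (Set V)) : Prop :=
  ∃ l : Set V → (V →ₗ[ℚ] ℚ),
    (∀ C, IsMaximalIn S C → ∀ C', IsMaximalIn S C' → ∀ x ∈ C ∩ C', l C x = l C' x) ∧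
    (∀ C, IsMaximalIn S C → ∀ C', IsMaximalIn S C' → C ≠ C' →
      ∀ x ∈ C, x ∉ C' → l C' x < l C x)

/-- The generators `5u+v−5w`, `−5u−5v+14w`, `4u−v` of the cone `σ`. -/
def genS : Fin 3 → (Fin 3 → ℚ) := ![![5, 1, -5], ![-5, -5, 14], ![4, -1, 0]]

/-- The cone `σ = Cone(5u+v−5w, −5u−5v+14w, 4u−v)` in `ℚ³`. -/
def coneSigma : Set (Fin 3 → ℚ) := coneGen genS

/-- The matrix of `ε` in the standard basis `(u, v, w)`:
`ε(u) = v`, `ε(v) = −u−v`, `ε(w) = w`. -/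
def epsMat : Matrix (Fin 3) (Fin 3) ℚ := ![![0, -1, 0], ![1, -1, 0], ![0, 0, 1]]

/-- The linear automorphism `ε : ℚ³ → ℚ³`. -/
def eps : (Fin 3 → ℚ) →ₗ[ℚ] (Fin 3 → ℚ) := Matrix.toLin' epsMat

/-! The difference `45u − 25w − (45u + 126w) = −151w` puts `−w` in `σ − ε(σ)` after scaling by
`1/151`, as both cones are stable under nonnegative scaling. Since `ε` fixes `w` and `ε³ = 1`,
applying `ε` and `ε²` carries `σ − ε(σ)` onto `ε(σ) − ε²(σ)` and `ε²(σ) − σ` while fixing `−w`. -/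

section Cones

variable {V W : Type*} [AddCommGroup V] [Module ℚ V] [AddCommGroup W] [Module ℚ W] {n : ℕ}

theorem smul_mem_coneGen {g : Fin n → V} {c : ℚ} (hc : 0 ≤ c) {x : V} (hx : x ∈ coneGen g) :
    c • x ∈ coneGen g := by
  obtain ⟨a, ha, rfl⟩ := hx
  exact ⟨c • a, fun i => mul_nonneg hc (ha i), by simp only [Finset.smul_sum, smul_smul]; rfl⟩

theorem image_coneGen (f : V →ₗ[ℚ] W) (g : Fin n → V) : f '' coneGen g = coneGen (f ∘ g) := by
  ext y
  constructor
  · rintro ⟨_, ⟨a, ha, rfl⟩, rfl⟩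
    exact ⟨a, ha, by simp⟩
  · rintro ⟨a, ha, rfl⟩
    exact ⟨∑ i, a i • g i, ⟨a, ha, rfl⟩, by simp⟩

theorem smul_mem_coneGen_sub_coneGen {m : ℕ} {g : Fin m → V} {h : Fin n → V} {c : ℚ}
    (hc : 0 ≤ c) {x : V} (hx : x ∈ coneGen g - coneGen h) : c • x ∈ coneGen g - coneGen h := by
  obtain ⟨y, hy, z, hz, rfl⟩ := hx
  rw [smul_sub]
  exact Set.sub_mem_sub (smul_mem_coneGen hc hy) (smul_mem_coneGen hc hz)

end Cones

theorem apply_mem_image_sub_image {G H F : Type*} [AddGroup G] [AddGroup H]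
    [FunLike F G H] [AddMonoidHomClass F G H] (f : F) {s t : Set G} {x : G}
    (hx : x ∈ s - t) : f x ∈ f '' s - f '' t :=
  Set.image_sub f ▸ Set.mem_image_of_mem f hx

theorem eps_apply (x : Fin 3 → ℚ) : eps x = ![-x 1, x 0 - x 1, x 2] := by
  rw [eps, Matrix.toLin'_apply]
  ext i
  fin_cases i <;> simp [epsMat, Matrix.mulVec, dotProduct, Fin.sum_univ_three, sub_eq_add_neg]

theorem eps_eps_eps (x : Fin 3 → ℚ) : eps (eps (eps x)) = x := by
  ext i
  fin_cases i <;> simp [eps_apply]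
  ring

theorem image_eps_image_eps_image_eps (s : Set (Fin 3 → ℚ)) : eps '' (eps '' (eps '' s)) = s := by
  simp [Set.image_image, eps_eps_eps]

theorem eps_neg_w : eps ![0, 0, -1] = ![0, 0, -1] := by
  simp [eps_apply]

theorem mem_coneSigma_of_eq {x : Fin 3 → ℚ} (c : Fin 3 → ℚ) (hc : ∀ i, 0 ≤ c i)
    (hx : x = c 0 • genS 0 + c 1 • genS 1 + c 2 • genS 2) : x ∈ coneSigma :=
  ⟨c, hc, by rw [hx, Fin.sum_univ_three]⟩

/-- `45u − 25w ∈ σ`, `45u + 126w ∈ ε(σ)`,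
`(45u − 25w) − (45u + 126w) = −151w`, and consequently
`−w ∈ (σ − ε(σ)) ∩ (ε(σ) − ε²(σ)) ∩ (ε²(σ) − σ)`, where `C − C'` is the
pointwise difference `{x − y : x ∈ C, y ∈ C'}`. -/
theorem neg_w_mem_differences :
    (![45, 0, -25] : Fin 3 → ℚ) ∈ coneSigma ∧
    (![45, 0, 126] : Fin 3 → ℚ) ∈ ⇑eps '' coneSigma ∧
    (![45, 0, -25] - ![45, 0, 126] : Fin 3 → ℚ) = ![0, 0, -151] ∧
    (![0, 0, -1] : Fin 3 → ℚ) ∈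
      (coneSigma - ⇑eps '' coneSigma) ∩
      ((⇑eps '' coneSigma) - ⇑eps '' (⇑eps '' coneSigma)) ∩
      ((⇑eps '' (⇑eps '' coneSigma)) - coneSigma) := by
  have hx : (![45, 0, -25] : Fin 3 → ℚ) ∈ coneSigma :=
    mem_coneSigma_of_eq ![5, 0, 5] (by simp [Fin.forall_fin_succ])
      (by ext i; fin_cases i <;> simp [genS, Matrix.cons_val_two] <;> norm_num)
  have hy : (![45, 0, 126] : Fin 3 → ℚ) ∈ ⇑eps '' coneSigma :=
    ⟨![-45, -45, 126],
      mem_coneSigma_of_eq ![0, 9, 0] (by simp [Fin.forall_fin_succ])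
        (by ext i; fin_cases i <;> simp [genS, Matrix.cons_val_two] <;> norm_num),
      by rw [eps_apply]; ext i; fin_cases i <;> norm_num [Matrix.cons_val_two]⟩
  have hdiff : (![45, 0, -25] - ![45, 0, 126] : Fin 3 → ℚ) = ![0, 0, -151] := by
    ext i; fin_cases i <;> norm_num
  have h₁ : (![0, 0, -1] : Fin 3 → ℚ) ∈ coneSigma - ⇑eps '' coneSigma := by
    have h := Set.sub_mem_sub hx hy
    rw [hdiff] at h
    rw [coneSigma, image_coneGen] at h ⊢
    convert smul_mem_coneGen_sub_coneGen (c := 1 / 151) (by norm_num) h using 1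
    ext i; fin_cases i <;> norm_num
  have h₂ := eps_neg_w ▸ apply_mem_image_sub_image eps h₁
  have h₃ := eps_neg_w ▸ apply_mem_image_sub_image eps h₂
  rw [image_eps_image_eps_image_eps] at h₃
  exact ⟨hx, hy, hdiff, ⟨h₁, h₂⟩, h₃⟩
end

section
/- Every fan in a two-dimensional ℚ-vector space is quasi-projective. In particular, every fan in ℚ² is quasi-projective. -/
open Pointwise

/-!
Fix a strictly convex gauge `N` on `V`: a positively homogeneous, subadditive function whose
triangle inequality is strict except along rays, and which admits at every point a linear
minorant touching it there. On `ℚⁿ`, `‖y‖₁ + ‖y‖₂² / ‖y‖₁` is one.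

In dimension two every strictly convex cone is spanned by two vectors. For a maximal cone spanned
by independent `u, v`, the linear form `l_C` interpolating `N` at `u` and `v` is `≥ N` on the cone
and, by strictness, `< N` off it. For a maximal ray through `r`, a linear minorant of `N` touching
it at `r` is `< N` off the ray. In both cases `l_C = N` on the edges of `C`, which contain its
intersections with the other maximal cones, and for `x ∈ C \ C'` we get
`l_{C'} x < N x ≤ l_C x`.
-/

open Module Matrix

section Cones

lemma eq_zero_of_mem_of_neg_mem {G : Type*} [AddGroup G] {K : Set G} (hK : K ∩ -K = {0})
    {x : G} (hx : x ∈ K) (hnx : -x ∈ K) : x = 0 := by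
  have : x ∈ K ∩ -K := ⟨hx, Set.mem_neg.2 hnx⟩
  rwa [hK] at this

lemma inter_neg_eq_zero_of_subset {G : Type*} [AddGroup G] {K L : Set G} (hKL : K ⊆ L)
    (hK : (0 : G) ∈ K) (hL : L ∩ -L = {0}) : K ∩ -K = {0} :=
  Set.eq_singleton_iff_unique_mem.2 ⟨⟨hK, by simpa using hK⟩, fun _ hx =>
    eq_zero_of_mem_of_neg_mem hL (hKL hx.1) (hKL (Set.mem_neg.1 hx.2))⟩

variable {V : Type*} [AddCommGroup V] [Module ℚ V]

lemma mem_coneGen_cons {n : ℕ} {w x : V} {g : Fin n → V} :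
    x ∈ coneGen (vecCons w g) ↔ ∃ a : ℚ, 0 ≤ a ∧ ∃ y ∈ coneGen g, a • w + y = x := by
  simp only [coneGen, Set.mem_ofPred_eq, Fin.exists_fin_succ_pi, Fin.forall_fin_succ,
    vecCons, Fin.cons_zero, Fin.cons_succ, Fin.sum_univ_succ]
  constructor
  · rintro ⟨a, c, ⟨ha, hc⟩, rfl⟩
    exact ⟨a, ha, _, ⟨c, hc, rfl⟩, rfl⟩
  · rintro ⟨a, ha, _, ⟨c, hc, rfl⟩, rfl⟩
    exact ⟨a, c, ⟨ha, hc⟩, rfl⟩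

lemma coneGen_fin_zero (g : Fin 0 → V) : coneGen g = {0} := by
  ext x
  simp [coneGen]

lemma zero_mem_coneGen {n : ℕ} (g : Fin n → V) : (0 : V) ∈ coneGen g :=
  ⟨0, fun _ => le_rfl, by simp⟩

lemma mem_coneGen_one {r x : V} : x ∈ coneGen ![r] ↔ ∃ a : ℚ, 0 ≤ a ∧ a • r = x := by
  simp [mem_coneGen_cons, coneGen_fin_zero]

lemma mem_coneGen_two {u v x : V} :
    x ∈ coneGen ![u, v] ↔ ∃ a b : ℚ, 0 ≤ a ∧ 0 ≤ b ∧ a • u + b • v = x := by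
  simp [mem_coneGen_cons, coneGen_fin_zero]

lemma mem_coneGen_three {u v w x : V} :
    x ∈ coneGen ![u, v, w] ↔
      ∃ a b c : ℚ, 0 ≤ a ∧ 0 ≤ b ∧ 0 ≤ c ∧ a • u + b • v + c • w = x := by
  simp [mem_coneGen_cons, coneGen_fin_zero, add_assoc]

lemma coneGen_two_comm (u v : V) : coneGen ![u, v] = coneGen ![v, u] := by
  ext x
  simp only [mem_coneGen_two]
  constructor <;> rintro ⟨a, b, ha, hb, rfl⟩ <;> exact ⟨b, a, hb, ha, add_comm _ _⟩

lemma coneGen_three_rotate (u v w : V) : coneGen ![u, v, w] = coneGen ![v, w, u] := by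
  ext x
  simp only [mem_coneGen_three]
  constructor
  · rintro ⟨a, b, c, ha, hb, hc, rfl⟩
    exact ⟨b, c, a, hb, hc, ha, by abel⟩
  · rintro ⟨a, b, c, ha, hb, hc, rfl⟩
    exact ⟨c, a, b, hc, ha, hb, by abel⟩

lemma coneGen_two_eq_one_of_mem {u v : V} (hu : u ∈ coneGen ![v]) :
    coneGen ![u, v] = coneGen ![v] := by
  obtain ⟨ρ, hρ, rfl⟩ := mem_coneGen_one.1 hu
  ext x
  simp only [mem_coneGen_one, mem_coneGen_two]
  constructor
  · rintro ⟨a, b, ha, hb, rfl⟩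
    exact ⟨a * ρ + b, by positivity, by module⟩
  · rintro ⟨b, hb, rfl⟩
    exact ⟨0, b, le_rfl, hb, by simp⟩

lemma coneGen_three_eq_two_of_mem {u v w : V} (hu : u ∈ coneGen ![v, w]) :
    coneGen ![u, v, w] = coneGen ![v, w] := by
  obtain ⟨β, γ, hβ, hγ, rfl⟩ := mem_coneGen_two.1 hu
  ext x
  simp only [mem_coneGen_two, mem_coneGen_three]
  constructor
  · rintro ⟨a, b, c, ha, hb, hc, rfl⟩
    exact ⟨a * β + b, a * γ + c, by positivity, by positivity, by module⟩
  · rintro ⟨b, c, hb, hc, rfl⟩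
    exact ⟨0, b, c, le_rfl, hb, hc, by simp⟩

lemma mem_coneGen_two_of_relation {K : Set V} (hK : K ∩ -K = {0}) {x y z : V} (hx : x ∈ K)
    (hyz : coneGen ![y, z] ⊆ K) {a b c : ℚ} (h : a • x + b • y + c • z = 0) (ha : a ≠ 0)
    (hbc : 0 ≤ b * c) : x ∈ coneGen ![y, z] := by
  have hx' : x = (-b / a) • y + (-c / a) • z := by
    have hax : a • x = -(b • y + c • z) := eq_neg_of_add_eq_zero_left (by rw [← add_assoc, h])
    calc x = a⁻¹ • (a • x) := by rw [smul_smul, inv_mul_cancel₀ ha, one_smul]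
      _ = _ := by rw [hax]; module
  have hsign : 0 ≤ (-b / a) * (-c / a) := by
    rw [div_mul_div_comm, neg_mul_neg]
    exact div_nonneg hbc (mul_self_nonneg a)
  rcases mul_nonneg_iff.1 hsign with ⟨hb, hc⟩ | ⟨hb, hc⟩
  · exact mem_coneGen_two.2 ⟨_, _, hb, hc, hx'.symm⟩
  · have hnx : -x ∈ coneGen ![y, z] :=
      mem_coneGen_two.2 ⟨b / a, c / a, by rw [neg_div] at hb; linarith,
        by rw [neg_div] at hc; linarith, by rw [hx']; module⟩
    rw [eq_zero_of_mem_of_neg_mem hK hx (hyz hnx)]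
    exact zero_mem_coneGen _

lemma coneGen_two_eq_one_of_relation {u v : V}
    (hK : coneGen ![u, v] ∩ -coneGen ![u, v] = {0}) {s t : ℚ} (h : s • u + t • v = 0)
    (hs : s ≠ 0) : coneGen ![u, v] = coneGen ![v] := by
  have hsub : coneGen ![v, v] ⊆ coneGen ![u, v] := by
    intro x hx
    obtain ⟨a, b, ha, hb, rfl⟩ := mem_coneGen_two.1 hx
    exact mem_coneGen_two.2 ⟨0, a + b, le_rfl, by positivity, by module⟩
  have hu := mem_coneGen_two_of_relation hK
    (mem_coneGen_two.2 ⟨1, 0, zero_le_one, le_rfl, by simp⟩ : u ∈ coneGen ![u, v]) hsub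
    (c := 0) (by rw [h, zero_smul, add_zero]) hs (by simp)
  obtain ⟨a, b, ha, hb, rfl⟩ := mem_coneGen_two.1 hu
  exact coneGen_two_eq_one_of_mem (mem_coneGen_one.2 ⟨a + b, by positivity, by module⟩)

end Cones

section DimTwo

variable {V : Type*} [AddCommGroup V] [Module ℚ V]

lemma exists_smul_add_smul_add_smul_eq_zero (hV : finrank ℚ V = 2) (x y z : V) :
    ∃ a b c : ℚ, (a ≠ 0 ∨ b ≠ 0 ∨ c ≠ 0) ∧ a • x + b • y + c • z = 0 := by
  have := Module.finite_of_finrank_eq_succ hV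
  have hdep : ¬LinearIndependent ℚ ![x, y, z] := fun hli => by
    simpa [hV] using hli.fintype_card_le_finrank
  obtain ⟨c, hc, i, hi⟩ := Fintype.not_linearIndependent_iff.1 hdep
  refine ⟨c 0, c 1, c 2, ?_, by simpa [Fin.sum_univ_three, add_assoc] using hc⟩
  fin_cases i <;> simp_all

lemma ne_zero_and_mul_nonneg_of_ne_zero {a b c : ℚ} (h : a ≠ 0 ∨ b ≠ 0 ∨ c ≠ 0) :
    (a ≠ 0 ∧ 0 ≤ b * c) ∨ (b ≠ 0 ∧ 0 ≤ c * a) ∨ (c ≠ 0 ∧ 0 ≤ a * b) := by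
  by_contra! H
  obtain ⟨ha, hb, hc⟩ := H
  rcases eq_or_ne a 0 with rfl | ha0
  · rcases eq_or_ne b 0 with rfl | hb0
    · simp_all
    · exact absurd (hb hb0) (by simp)
  · have h1 := ha ha0
    rcases eq_or_ne b 0 with rfl | hb0
    · simp at h1
    have h2 := hb hb0
    rcases eq_or_ne c 0 with rfl | hc0
    · simp at h2
    -- `b * c`, `c * a` and `a * b` cannot all be negative: their product is a square
    nlinarith [hc hc0, mul_pos_of_neg_of_neg h1 h2, sq_nonneg c]

theorem exists_coneGen_three_eq_coneGen_two (hV : finrank ℚ V = 2) {x y z : V}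
    (hK : coneGen ![x, y, z] ∩ -coneGen ![x, y, z] = {0}) :
    ∃ p q, coneGen ![x, y, z] = coneGen ![p, q] := by
  have hmem : ∀ {x y z : V}, x ∈ coneGen ![x, y, z] := fun {x y z} =>
    mem_coneGen_three.2 ⟨1, 0, 0, zero_le_one, le_rfl, le_rfl, by simp⟩
  have hsub : ∀ {x y z : V}, coneGen ![y, z] ⊆ coneGen ![x, y, z] := fun {x y z} w hw => by
    obtain ⟨b, c, hb, hc, rfl⟩ := mem_coneGen_two.1 hw
    exact mem_coneGen_three.2 ⟨0, b, c, le_rfl, hb, hc, by simp⟩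
  obtain ⟨a, b, c, hne, h⟩ := exists_smul_add_smul_add_smul_eq_zero hV x y z
  rcases ne_zero_and_mul_nonneg_of_ne_zero hne with ⟨ha, hbc⟩ | ⟨hb, hca⟩ | ⟨hc, hab⟩
  · exact ⟨y, z, coneGen_three_eq_two_of_mem (mem_coneGen_two_of_relation hK hmem hsub h ha hbc)⟩
  · rw [coneGen_three_rotate] at hK ⊢
    exact ⟨z, x, coneGen_three_eq_two_of_mem (mem_coneGen_two_of_relation hK hmem hsub
      (by rw [← h]; abel) hb hca)⟩
  · rw [coneGen_three_rotate, coneGen_three_rotate] at hK ⊢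
    exact ⟨x, y, coneGen_three_eq_two_of_mem (mem_coneGen_two_of_relation hK hmem hsub
      (by rw [← h]; abel) hc hab)⟩

theorem exists_coneGen_eq_coneGen_two (hV : finrank ℚ V = 2) :
    ∀ {n : ℕ} (g : Fin n → V), coneGen g ∩ -coneGen g = {0} →
      ∃ u v, coneGen g = coneGen ![u, v]
  | 0, g, _ => ⟨0, 0, by
    ext x
    simp only [coneGen_fin_zero, Set.mem_singleton_iff, mem_coneGen_two, smul_zero, add_zero]
    exact ⟨fun h => ⟨0, 0, le_rfl, le_rfl, h.symm⟩, fun ⟨_, _, _, _, h⟩ => h.symm⟩⟩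
  | n + 1, g, hg => by
    rw [← cons_head_tail g] at hg ⊢
    have htail : coneGen (vecTail g) ⊆ coneGen (vecCons (vecHead g) (vecTail g)) :=
      fun y hy => mem_coneGen_cons.2 ⟨0, le_rfl, y, hy, by simp⟩
    obtain ⟨u, v, huv⟩ := exists_coneGen_eq_coneGen_two hV (vecTail g)
      (inter_neg_eq_zero_of_subset htail (zero_mem_coneGen _) hg)
    have hcons : coneGen (vecCons (vecHead g) (vecTail g)) = coneGen ![vecHead g, u, v] := by
      ext x
      rw [mem_coneGen_cons, mem_coneGen_cons, huv]
    rw [hcons] at hg ⊢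
    exact exists_coneGen_three_eq_coneGen_two hV hg

lemma exists_smul_add_smul_eq (hV : finrank ℚ V = 2) {u v : V}
    (hli : LinearIndependent ℚ ![u, v]) (x : V) : ∃ a b : ℚ, a • u + b • v = x := by
  let B := basisOfLinearIndependentOfCardEqFinrank hli (by simp [hV])
  refine ⟨B.repr x 0, B.repr x 1, ?_⟩
  conv_rhs => rw [← B.sum_repr x]
  simp [B, Fin.sum_univ_two]

lemma exists_linearMap_apply_eq (hV : finrank ℚ V = 2) {u v : V}
    (hli : LinearIndependent ℚ ![u, v]) (a b : ℚ) : ∃ f : V →ₗ[ℚ] ℚ, f u = a ∧ f v = b := by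
  let B := basisOfLinearIndependentOfCardEqFinrank hli (by simp [hV])
  refine ⟨B.constr ℚ ![a, b], ?_, ?_⟩
  · simpa [B] using B.constr_basis ℚ ![a, b] 0
  · simpa [B] using B.constr_basis ℚ ![a, b] 1

end DimTwo

structure IsStrictlyConvexGauge {V : Type*} [AddCommGroup V] [Module ℚ V] (N : V → ℚ) :
    Prop where
  map_nonneg_smul : ∀ {t : ℚ}, 0 ≤ t → ∀ x, N (t • x) = t * N x
  map_add_le : ∀ x y, N (x + y) ≤ N x + N y
  sameRay_of_map_add_eq : ∀ {x y}, N (x + y) = N x + N y → SameRay ℚ x y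
  exists_subgradient : ∀ x, ∃ f : V →ₗ[ℚ] ℚ, (∀ y, f y ≤ N y) ∧ f x = N x

namespace IsStrictlyConvexGauge

variable {V : Type*} [AddCommGroup V] [Module ℚ V] {N : V → ℚ}

lemma apply_zero (hN : IsStrictlyConvexGauge N) : N 0 = 0 := by
  simpa using hN.map_nonneg_smul le_rfl (0 : V)

lemma add_apply_neg_pos (hN : IsStrictlyConvexGauge N) {x : V} (hx : x ≠ 0) :
    0 < N x + N (-x) := by
  have hle := hN.map_add_le x (-x)
  rw [add_neg_cancel, hN.apply_zero] at hle
  refine hle.lt_of_ne fun h => hx (eq_zero_of_sameRay_self_neg (R := ℚ) ?_)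
  exact hN.sameRay_of_map_add_eq (by rw [add_neg_cancel, hN.apply_zero, h])

lemma apply_eq_of_mem_coneGen_one (hN : IsStrictlyConvexGauge N) {f : V →ₗ[ℚ] ℚ} {u x : V}
    (hu : f u = N u) (hx : x ∈ coneGen ![u]) : f x = N x := by
  obtain ⟨a, ha, rfl⟩ := mem_coneGen_one.1 hx
  rw [map_smul, hN.map_nonneg_smul ha, smul_eq_mul, hu]

lemma le_of_mem_coneGen_two (hN : IsStrictlyConvexGauge N) {f : V →ₗ[ℚ] ℚ} {u v x : V}
    (hu : f u = N u) (hv : f v = N v) (hx : x ∈ coneGen ![u, v]) : N x ≤ f x := by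
  obtain ⟨a, b, ha, hb, rfl⟩ := mem_coneGen_two.1 hx
  calc N (a • u + b • v) ≤ N (a • u) + N (b • v) := hN.map_add_le _ _
    _ = f (a • u + b • v) := by simp [hN.map_nonneg_smul ha, hN.map_nonneg_smul hb, hu, hv]

/-- If `x = a • u + b • v` with `b < 0 ≤ a`, then `a • u = x + (-b) • v` and subadditivity give
`f x ≤ N x`; equality would put `x` on the ray through `v`. -/
lemma lt_of_neg_right (hN : IsStrictlyConvexGauge N) {f : V →ₗ[ℚ] ℚ} {u v : V}
    (hu : f u = N u) (hv : f v = N v) {a b : ℚ} (ha : 0 ≤ a) (hb : b < 0)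
    (hx : a • u + b • v ∉ coneGen ![u, v]) : f (a • u + b • v) < N (a • u + b • v) := by
  set x := a • u + b • v
  have hsplit : x + (-b) • v = a • u := by simp [x]
  have hfx : f x = N (a • u) - N ((-b) • v) := by
    rw [hN.map_nonneg_smul ha, hN.map_nonneg_smul (neg_nonneg.2 hb.le)]
    simp [x, hu, hv]
  have hle := hN.map_add_le x ((-b) • v)
  rw [hsplit] at hle
  refine (hfx.trans_le (by linarith)).lt_of_ne fun heq => hx ?_
  have hray := hN.sameRay_of_map_add_eq (x := x) (y := (-b) • v) (by rw [hsplit]; linarith)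
  rcases eq_or_ne ((-b) • v) 0 with hv0 | hv0
  · have : v = 0 := (smul_eq_zero.1 hv0).resolve_left (by linarith)
    exact mem_coneGen_two.2 ⟨a, 0, ha, le_rfl, by simp [x, this]⟩
  · obtain ⟨ρ, hρ, hxρ⟩ := hray.exists_nonneg_right hv0
    exact mem_coneGen_two.2 ⟨0, ρ * -b, le_rfl, mul_nonneg hρ (by linarith),
      by rw [hxρ, smul_smul]; simp⟩

lemma lt_of_notMem_coneGen_two (hN : IsStrictlyConvexGauge N) {f : V →ₗ[ℚ] ℚ} {u v : V}
    (hu : f u = N u) (hv : f v = N v) {a b : ℚ} (hx : a • u + b • v ∉ coneGen ![u, v]) :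
    f (a • u + b • v) < N (a • u + b • v) := by
  rcases le_or_gt 0 a with ha | ha <;> rcases le_or_gt 0 b with hb | hb
  · exact absurd (mem_coneGen_two.2 ⟨a, b, ha, hb, rfl⟩) hx
  · exact hN.lt_of_neg_right hu hv ha hb hx
  · rw [add_comm] at hx ⊢
    rw [coneGen_two_comm] at hx
    exact hN.lt_of_neg_right hv hu hb ha hx
  · -- `-x` lies in the cone, where `N ≤ f`, and `N x + N (-x) > 0`.
    set x := a • u + b • v
    have hnx : -x ∈ coneGen ![u, v] :=
      mem_coneGen_two.2 ⟨-a, -b, by linarith, by linarith, by simp [x]; abel⟩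
    have hx0 : x ≠ 0 := fun h => hx (h ▸ zero_mem_coneGen _)
    have hle := hN.le_of_mem_coneGen_two hu hv hnx
    have hpos := hN.add_apply_neg_pos hx0
    rw [map_neg] at hle
    linarith

lemma lt_of_notMem_coneGen_one (hN : IsStrictlyConvexGauge N) {f : V →ₗ[ℚ] ℚ} {r x : V}
    (hf : ∀ y, f y ≤ N y) (hr : f r = N r) (hr0 : r ≠ 0) (hx : x ∉ coneGen ![r]) : f x < N x := by
  refine (hf x).lt_of_ne fun heq => hx ?_
  have hsum : N (r + x) = N r + N x :=
    le_antisymm (hN.map_add_le r x) (by rw [← hr, ← heq, ← map_add]; exact hf _)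
  obtain ⟨ρ, hρ, rfl⟩ := (hN.sameRay_of_map_add_eq hsum).exists_nonneg_left hr0
  exact mem_coneGen_one.2 ⟨ρ, hρ, rfl⟩

lemma comp_linearEquiv {W : Type*} [AddCommGroup W] [Module ℚ W] {N : W → ℚ}
    (hN : IsStrictlyConvexGauge N) (e : V ≃ₗ[ℚ] W) : IsStrictlyConvexGauge (N ∘ e) where
  map_nonneg_smul ht x := by simp [hN.map_nonneg_smul ht]
  map_add_le x y := by simpa using hN.map_add_le (e x) (e y)
  sameRay_of_map_add_eq h :=
    (SameRay.sameRay_map_iff e).1 (hN.sameRay_of_map_add_eq (by simpa using h))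
  exists_subgradient x := by
    obtain ⟨f, hf, hfx⟩ := hN.exists_subgradient (e x)
    exact ⟨f ∘ₗ e.toLinearMap, fun y => hf (e y), hfx⟩

end IsStrictlyConvexGauge

section StrictGauge

variable {ι : Type*} [Fintype ι]

def absSum (y : ι → ℚ) : ℚ := ∑ i, |y i|

/-- `‖y‖₁ + ‖y‖₂² / ‖y‖₁`, with value `0 / 0 = 0` in the quotient at `y = 0`. -/
def strictGauge (y : ι → ℚ) : ℚ := absSum y + y ⬝ᵥ y / absSum y

lemma absSum_nonneg (y : ι → ℚ) : 0 ≤ absSum y :=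
  Finset.sum_nonneg fun i _ => abs_nonneg (y i)

lemma absSum_pos {y : ι → ℚ} (hy : y ≠ 0) : 0 < absSum y := by
  refine (absSum_nonneg y).lt_of_ne fun h => hy ?_
  ext i
  simpa using (Finset.sum_eq_zero_iff_of_nonneg fun i _ => abs_nonneg (y i)).1 h.symm i
    (Finset.mem_univ i)

lemma absSum_smul {t : ℚ} (ht : 0 ≤ t) (y : ι → ℚ) : absSum (t • y) = t * absSum y := by
  simp [absSum, Finset.mul_sum, abs_mul, abs_of_nonneg ht]

lemma absSum_add_le (x y : ι → ℚ) : absSum (x + y) ≤ absSum x + absSum y := by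
  rw [absSum, absSum, absSum, ← Finset.sum_add_distrib]
  exact Finset.sum_le_sum fun i _ => abs_add_le (x i) (y i)

lemma dotProduct_self_nonneg {R : Type*} [Ring R] [LinearOrder R] [IsStrictOrderedRing R]
    (y : ι → R) : 0 ≤ y ⬝ᵥ y :=
  Finset.sum_nonneg fun i _ => mul_self_nonneg (y i)

lemma dotProduct_self_le_absSum_sq (y : ι → ℚ) : y ⬝ᵥ y ≤ absSum y ^ 2 := by
  have := Finset.sum_sq_le_sq_sum_of_nonneg (s := Finset.univ) (f := fun i => |y i|)
    fun i _ => abs_nonneg (y i)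
  simpa [dotProduct, absSum, sq_abs, sq] using this

lemma strictGauge_nonneg (y : ι → ℚ) : 0 ≤ strictGauge y :=
  add_nonneg (absSum_nonneg y) (div_nonneg (dotProduct_self_nonneg y) (absSum_nonneg y))

lemma strictGauge_smul {t : ℚ} (ht : 0 ≤ t) (y : ι → ℚ) :
    strictGauge (t • y) = t * strictGauge y := by
  rcases ht.eq_or_lt with rfl | ht
  · simp [strictGauge, absSum]
  simp only [strictGauge, absSum_smul ht.le, dotProduct_smul, smul_dotProduct, smul_eq_mul]
  rw [mul_div_mul_left _ _ ht.ne', mul_add, mul_div_assoc]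

/-- The defect in Sedrakyan's inequality `‖x + y‖² / (p + q) ≤ ‖x‖² / p + ‖y‖² / q`,
written as a square. -/
lemma dotProduct_div_add_dotProduct_div_sub {p q : ℚ} (hp : 0 < p) (hq : 0 < q) (x y : ι → ℚ) :
    x ⬝ᵥ x / p + y ⬝ᵥ y / q - (x + y) ⬝ᵥ (x + y) / (p + q) =
      (q • x - p • y) ⬝ᵥ (q • x - p • y) / (p * q * (p + q)) := by
  simp only [add_dotProduct, dotProduct_add, sub_dotProduct, dotProduct_sub, smul_dotProduct,
    dotProduct_smul, smul_eq_mul, dotProduct_comm y x]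
  field_simp
  ring

lemma add_div_le_add_div_of_sq_le {S r s : ℚ} (hr : 0 < r) (hrs : r ≤ s) (hS : S ≤ r ^ 2) :
    r + S / r ≤ s + S / s := by
  have hs : 0 < s := hr.trans_le hrs
  rw [add_div' _ _ _ hr.ne', add_div' _ _ _ hs.ne', div_le_div_iff₀ hr hs]
  nlinarith [mul_le_mul_of_nonneg_left hrs hr.le]

@[simp] lemma strictGauge_zero : strictGauge (0 : ι → ℚ) = 0 := by
  simp [strictGauge, absSum]

lemma strictGauge_add_add_defect_le {x y : ι → ℚ} (hx : x ≠ 0) (hy : y ≠ 0) :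
    strictGauge (x + y) + (absSum y • x - absSum x • y) ⬝ᵥ (absSum y • x - absSum x • y) /
      (absSum x * absSum y * (absSum x + absSum y)) ≤ strictGauge x + strictGauge y := by
  have hp := absSum_pos hx
  have hq := absSum_pos hy
  have hsum : strictGauge (x + y) ≤
      absSum x + absSum y + (x + y) ⬝ᵥ (x + y) / (absSum x + absSum y) := by
    rcases eq_or_ne (x + y) 0 with hxy | hxy
    · rw [hxy, strictGauge_zero]
      exact add_nonneg (by positivity) (div_nonneg (dotProduct_self_nonneg _) (by positivity))
    · exact add_div_le_add_div_of_sq_le (absSum_pos hxy) (absSum_add_le x y)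
        (dotProduct_self_le_absSum_sq _)
  have := dotProduct_div_add_dotProduct_div_sub hp hq x y
  unfold strictGauge at hsum ⊢
  linarith

lemma strictGauge_add_le (x y : ι → ℚ) :
    strictGauge (x + y) ≤ strictGauge x + strictGauge y := by
  rcases eq_or_ne x 0 with rfl | hx
  · simp
  rcases eq_or_ne y 0 with rfl | hy
  · simp
  have hp := absSum_pos hx
  have hq := absSum_pos hy
  have hdefect := strictGauge_add_add_defect_le hx hy
  have : 0 ≤ (absSum y • x - absSum x • y) ⬝ᵥ (absSum y • x - absSum x • y) /
      (absSum x * absSum y * (absSum x + absSum y)) :=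
    div_nonneg (dotProduct_self_nonneg _) (by positivity)
  linarith

lemma sameRay_of_strictGauge_add_eq {x y : ι → ℚ}
    (h : strictGauge (x + y) = strictGauge x + strictGauge y) : SameRay ℚ x y := by
  rcases eq_or_ne x 0 with rfl | hx
  · exact SameRay.zero_left y
  rcases eq_or_ne y 0 with rfl | hy
  · exact SameRay.zero_right x
  have hp := absSum_pos hx
  have hq := absSum_pos hy
  have hdefect := strictGauge_add_add_defect_le hx hy
  have hzero : (absSum y • x - absSum x • y) ⬝ᵥ (absSum y • x - absSum x • y) = 0 := by
    refine le_antisymm ?_ (dotProduct_self_nonneg _)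
    have : (absSum y • x - absSum x • y) ⬝ᵥ (absSum y • x - absSum x • y) /
        (absSum x * absSum y * (absSum x + absSum y)) ≤ 0 := by linarith
    simpa using (div_le_iff₀ (by positivity)).1 this
  exact Or.inr <| Or.inr
    ⟨absSum y, absSum x, hq, hp, sub_eq_zero.1 (dotProduct_self_eq_zero.1 hzero)⟩

lemma sign_mul_le_abs (a b : ℚ) : (SignType.sign a : ℚ) * b ≤ |b| := by
  rcases lt_trichotomy a 0 with ha | rfl | ha <;> simp [*, neg_le_abs, le_abs_self]

lemma exists_subgradient_strictGauge (r : ι → ℚ) :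
    ∃ f : (ι → ℚ) →ₗ[ℚ] ℚ, (∀ y, f y ≤ strictGauge y) ∧ f r = strictGauge r := by
  rcases eq_or_ne r 0 with rfl | hr
  · exact ⟨0, strictGauge_nonneg, by simp⟩
  have hs := absSum_pos hr
  set s := absSum r with hs_def
  set σ : ι → ℚ := fun i => SignType.sign (r i)
  have hσ : ∀ y, σ ⬝ᵥ y ≤ absSum y := fun y =>
    Finset.sum_le_sum fun i _ => sign_mul_le_abs (r i) (y i)
  have hc : 0 ≤ 1 - r ⬝ᵥ r / s ^ 2 := by
    rw [sub_nonneg, div_le_one (by positivity)]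
    exact dotProduct_self_le_absSum_sq r
  -- the gradient of `strictGauge` at `r`; `f y ≤ strictGauge y` reduces to
  -- `‖s • y - ‖y‖₁ • r‖₂² ≥ 0`
  refine ⟨dotProductBilin ℚ ℚ ((1 - r ⬝ᵥ r / s ^ 2) • σ + (2 / s) • r), fun y => ?_, ?_⟩
  · simp only [dotProductBilin_apply_apply, add_dotProduct, smul_dotProduct, smul_eq_mul]
    rcases eq_or_ne y 0 with rfl | hy
    · simp
    have ht := absSum_pos hy
    have hsq := dotProduct_self_nonneg (s • y - absSum y • r)
    simp only [sub_dotProduct, dotProduct_sub, smul_dotProduct, dotProduct_smul, smul_eq_mul,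
      dotProduct_comm y r] at hsq
    have h1 := mul_le_mul_of_nonneg_left (hσ y) hc
    have h2 : 2 / s * (r ⬝ᵥ y) ≤ r ⬝ᵥ r / s ^ 2 * absSum y + y ⬝ᵥ y / absSum y := by
      rw [div_mul_eq_mul_div, div_mul_eq_mul_div, div_add_div _ _ (by positivity) ht.ne',
        div_le_div_iff₀ hs (by positivity)]
      nlinarith
    unfold strictGauge
    linarith
  · have : σ ⬝ᵥ r = s := Finset.sum_congr rfl fun i _ => sign_mul_self (r i)
    simp only [dotProductBilin_apply_apply, add_dotProduct, smul_dotProduct, smul_eq_mul, this,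
      strictGauge, ← hs_def]
    field_simp
    ring

theorem isStrictlyConvexGauge_strictGauge :
    IsStrictlyConvexGauge (strictGauge : (ι → ℚ) → ℚ) where
  map_nonneg_smul ht := strictGauge_smul ht
  map_add_le := strictGauge_add_le
  sameRay_of_map_add_eq := sameRay_of_strictGauge_add_eq
  exists_subgradient := exists_subgradient_strictGauge

end StrictGauge

theorem exists_isStrictlyConvexGauge (V : Type*) [AddCommGroup V] [Module ℚ V]
    [FiniteDimensional ℚ V] : ∃ N : V → ℚ, IsStrictlyConvexGauge N :=
  ⟨_, isStrictlyConvexGauge_strictGauge.comp_linearEquiv (Module.finBasis ℚ V).equivFun⟩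

section Fans

variable {V : Type*} [AddCommGroup V] [Module ℚ V] {S : Set (Set V)}

def IsSeparatingForm (N : V → ℚ) (S : Set (Set V)) (C : Set V) (f : V →ₗ[ℚ] ℚ) : Prop :=
  (∀ x ∈ C, N x ≤ f x) ∧
  (∀ C', IsMaximalIn S C' → C' ≠ C → ∀ x ∈ C ∩ C', f x = N x) ∧
  (∀ C', IsMaximalIn S C' → C' ≠ C → ∀ x ∈ C', x ∉ C → f x < N x)

theorem isQuasiProjectiveFan_of_forall_exists_isSeparatingForm (N : V → ℚ)
    (h : ∀ C, IsMaximalIn S C → ∃ f, IsSeparatingForm N S C f) : IsQuasiProjectiveFan S := by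
  choose! f hf using h
  refine ⟨f, fun C hC C' hC' x hx => ?_, fun C hC C' hC' hne x hxC hxC' => ?_⟩
  · rcases eq_or_ne C C' with rfl | hne
    · rfl
    · rw [(hf C hC).2.1 C' hC' hne.symm x hx, (hf C' hC').2.1 C hC hne x ⟨hx.2, hx.1⟩]
  · exact ((hf C' hC').2.2 C hC hne x hxC hxC').trans_le ((hf C hC).1 x hxC)

lemma IsMaximalIn.not_subset {C C' : Set V} (hC : IsMaximalIn S C)
    (hC' : C' ∈ S) (hne : C' ≠ C) : ¬C ⊆ C' :=
  fun h => hne (hC.2 C' hC' h)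

lemma IsFan.zero_mem (hS : IsFan S) {C : Set V} (hC : C ∈ S) : (0 : V) ∈ C := by
  obtain ⟨n, g, rfl⟩ := (hS.2.1 C hC).1
  exact zero_mem_coneGen g

lemma IsFaceOf.mem_coneGen_one_or_mem_coneGen_one {F : Set V} {u v x : V}
    (hF : IsFaceOf F (coneGen ![u, v])) (hproper : ¬coneGen ![u, v] ⊆ F) (hx : x ∈ F) :
    x ∈ coneGen ![u] ∨ x ∈ coneGen ![v] := by
  obtain ⟨l, hl, rfl⟩ := hF
  obtain ⟨⟨a, b, ha, hb, rfl⟩, hlx⟩ := And.imp_left mem_coneGen_two.1 hx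
  have hlu := hl u (mem_coneGen_two.2 ⟨1, 0, zero_le_one, le_rfl, by simp⟩)
  have hlv := hl v (mem_coneGen_two.2 ⟨0, 1, le_rfl, zero_le_one, by simp⟩)
  simp only [Set.mem_ofPred_eq, map_add, map_smul, smul_eq_mul] at hlx
  rcases hlu.eq_or_lt with hlu0 | hlu0
  · rcases hlv.eq_or_lt with hlv0 | hlv0
    · refine absurd (fun y hy => ⟨hy, ?_⟩) hproper
      obtain ⟨c, d, -, -, rfl⟩ := mem_coneGen_two.1 hy
      simp [← hlu0, ← hlv0]
    · have hb0 : b = 0 := by nlinarith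
      exact Or.inl (mem_coneGen_one.2 ⟨a, ha, by simp [hb0]⟩)
  · have ha0 : a = 0 := by nlinarith
    exact Or.inr (mem_coneGen_one.2 ⟨b, hb, by simp [ha0]⟩)

variable {N : V → ℚ}

lemma IsStrictlyConvexGauge.exists_isSeparatingForm_coneGen_one (hN : IsStrictlyConvexGauge N)
    (hS : IsFan S) {r : V} (hC : IsMaximalIn S (coneGen ![r])) :
    ∃ f, IsSeparatingForm N S (coneGen ![r]) f := by
  obtain ⟨f, hf, hfr⟩ := hN.exists_subgradient r
  have hfC : ∀ x ∈ coneGen ![r], f x = N x := fun x hx => hN.apply_eq_of_mem_coneGen_one hfr hx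
  refine ⟨f, fun x hx => (hfC x hx).ge, fun _ _ _ x hx => hfC x hx.1,
    fun C' hC' hne x _ hx => ?_⟩
  rcases eq_or_ne r 0 with rfl | hr0
  · -- the cone `{0}` lies in every cone of the fan, so it is maximal only if it is alone
    refine absurd (fun y hy => ?_) (hC.not_subset hC'.1 hne)
    obtain ⟨a, -, rfl⟩ := mem_coneGen_one.1 hy
    simpa using hS.zero_mem hC'.1
  · exact hN.lt_of_notMem_coneGen_one hf hfr hr0 hx

lemma IsStrictlyConvexGauge.exists_isSeparatingForm_coneGen_two (hN : IsStrictlyConvexGauge N)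
    (hS : IsFan S) (hV : finrank ℚ V = 2) {u v : V} (hli : LinearIndependent ℚ ![u, v])
    (hC : IsMaximalIn S (coneGen ![u, v])) : ∃ f, IsSeparatingForm N S (coneGen ![u, v]) f := by
  obtain ⟨f, hfu, hfv⟩ := exists_linearMap_apply_eq hV hli (N u) (N v)
  refine ⟨f, fun x hx => hN.le_of_mem_coneGen_two hfu hfv hx, fun C' hC' hne x hx => ?_,
    fun C' _ _ x _ hx => ?_⟩
  · have hproper : ¬coneGen ![u, v] ⊆ coneGen ![u, v] ∩ C' :=
      fun h => hC.not_subset hC'.1 hne (h.trans Set.inter_subset_right)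
    rcases (hS.2.2.2 _ hC.1 C' hC'.1).1.mem_coneGen_one_or_mem_coneGen_one hproper hx with hx | hx
    · exact hN.apply_eq_of_mem_coneGen_one hfu hx
    · exact hN.apply_eq_of_mem_coneGen_one hfv hx
  · obtain ⟨a, b, rfl⟩ := exists_smul_add_smul_eq hV hli x
    exact hN.lt_of_notMem_coneGen_two hfu hfv hx

lemma IsStrictlyConvexGauge.exists_isSeparatingForm (hN : IsStrictlyConvexGauge N)
    (hS : IsFan S) (hV : finrank ℚ V = 2) {C : Set V} (hC : IsMaximalIn S C) :
    ∃ f, IsSeparatingForm N S C f := by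
  obtain ⟨⟨n, g, rfl⟩, hsc⟩ := hS.2.1 C hC.1
  obtain ⟨u, v, huv⟩ := exists_coneGen_eq_coneGen_two hV g hsc
  rw [huv] at hC hsc ⊢
  by_cases hli : LinearIndependent ℚ ![u, v]
  · exact hN.exists_isSeparatingForm_coneGen_two hS hV hli hC
  obtain ⟨s, t, hst, hne⟩ : ∃ s t : ℚ, s • u + t • v = 0 ∧ (s ≠ 0 ∨ t ≠ 0) := by
    simpa [LinearIndependent.pair_iff, or_iff_not_imp_left] using hli
  rcases hne with hs | ht
  · rw [coneGen_two_eq_one_of_relation hsc hst hs] at hC ⊢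
    exact hN.exists_isSeparatingForm_coneGen_one hS hC
  · rw [coneGen_two_comm] at hsc hC ⊢
    rw [coneGen_two_eq_one_of_relation hsc (by rw [add_comm]; exact hst) ht] at hC ⊢
    exact hN.exists_isSeparatingForm_coneGen_one hS hC

theorem IsFan.isQuasiProjectiveFan (hS : IsFan S) (hV : finrank ℚ V = 2) :
    IsQuasiProjectiveFan S := by
  have := Module.finite_of_finrank_eq_succ hV
  obtain ⟨N, hN⟩ := exists_isStrictlyConvexGauge V
  exact isQuasiProjectiveFan_of_forall_exists_isSeparatingForm N
    fun C hC => hN.exists_isSeparatingForm hS hV hC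

end Fans

/-- Every fan in a two-dimensional `ℚ`-vector space is
quasi-projective; in particular, every fan in `ℚ²` is quasi-projective. -/
theorem fan_in_dim_two_quasiProjective :
    (∀ (V : Type) [AddCommGroup V] [Module ℚ V] [FiniteDimensional ℚ V],
      Module.finrank ℚ V = 2 → ∀ S : Set (Set V), IsFan S → IsQuasiProjectiveFan S) ∧
    (∀ S : Set (Set (Fin 2 → ℚ)), IsFan S → IsQuasiProjectiveFan S) :=
  ⟨fun _ _ _ _ hV _ hS => hS.isQuasiProjectiveFan hV,
    fun _ hS => hS.isQuasiProjectiveFan (by simp)⟩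
end
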